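/- Let r ≥ 2, let x_1, …, x_r be roots of unity, and let k_1, …, k_r ≥ 1 with (k_r, x_r) ≠ (1,1). Then the difference S̃i_{k_1,…,k_r}(x_1,…,x_r) - (-1)^{k_1+⋯+k_r+r} (x_2 x_3^2 ⋯ x_r^{r-1}) S̃i_{k_1,…,k_r}(x_1^{-1},…,x_r^{-1}) equals (√x_2)(√x_3)^2 ⋯ (√x_r)^{r-1} times the sum over all sign choices σ_1, …, σ_r ∈ {±1} of σ_2 σ_3^2 ⋯ σ_r^{r-1} ( Li_{k_1,…,k_r}(σ_1√x_1, …, σ_r√x_r) - (-1)^{k_1+⋯+k_r+r} Li_{k_1,…,k_r}(1/(σ_1√x_1), …, 1/(σ_r√x_r)) ), where √x_j denotes a fixed square root of x_j. -/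

import Mathlib

open Complex Filter Finset Topology

/-- Polylogarithm `Li_p(x) = ∑_{n≥1} x^n / n^p`. -/
noncomputable def cLi (p : ℕ) (x : ℂ) : ℂ := ∑' n : ℕ, x ^ (n + 1) / ((n : ℂ) + 1) ^ p

/-- t-polylogarithm `t̃_p(x) = ∑_{n≥1} x^n / (n - 1/2)^p`. -/
noncomputable def ctt (p : ℕ) (x : ℂ) : ℂ := ∑' n : ℕ, x ^ (n + 1) / ((n : ℂ) + 1 / 2) ^ p

/-- Finite sum `ζ_n(p;x) = ∑_{k=1}^n x^k / k^p`. -/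
noncomputable def czfin (n p : ℕ) (x : ℂ) : ℂ :=
  ∑ k ∈ Finset.range n, x ^ (k + 1) / ((k : ℂ) + 1) ^ p

/-- Finite sum `t_n(p;x) = ∑_{k=1}^n x^k / (k - 1/2)^p`. -/
noncomputable def ctfin (n p : ℕ) (x : ℂ) : ℂ :=
  ∑ k ∈ Finset.range n, x ^ (k + 1) / ((k : ℂ) + 1 / 2) ^ p

/-- `φ(s;x) = ∑_{k≥0} x^k / (k + s)`. -/
noncomputable def cphi (s x : ℂ) : ℂ := ∑' k : ℕ, x ^ k / ((k : ℂ) + s)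

/-- `Φ(s;x) = φ(s;x) - φ(-s;x⁻¹) - 1/s`. -/
noncomputable def cPhi (s x : ℂ) : ℂ := cphi s x - cphi (-s) x⁻¹ - 1 / s

/-- `x` is a root of unity. -/
def IsRootOfUnity (x : ℂ) : Prop := ∃ n : ℕ, 0 < n ∧ x ^ n = 1

/-- Linear cyclotomic Euler R-sum `R_{p;q}(x;y) = ∑_{n≥0} ζ_n(p;x) y^n/(n+1/2)^q`. -/
noncomputable def cR1 (p q : ℕ) (x y : ℂ) : ℂ :=
  ∑' n : ℕ, czfin n p x * y ^ n / ((n : ℂ) + 1 / 2) ^ q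

/-- Quadratic cyclotomic Euler R-sum `R_{p,r;q}(x,z;y)`. -/
noncomputable def cR2 (p r q : ℕ) (x z y : ℂ) : ℂ :=
  ∑' n : ℕ, czfin n p x * czfin n r z * y ^ n / ((n : ℂ) + 1 / 2) ^ q

/-- Linear cyclotomic Euler S̃-sum `S̃_{p;q}(x;y) = ∑_{n≥1} t_n(p;x) y^n/n^q`. -/
noncomputable def cS1 (p q : ℕ) (x y : ℂ) : ℂ :=
  ∑' n : ℕ, ctfin (n + 1) p x * y ^ (n + 1) / ((n : ℂ) + 1) ^ q

/-- Quadratic cyclotomic Euler S̃-sum `S̃_{p,r;q}(x,z;y)`. -/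
noncomputable def cS2 (p r q : ℕ) (x z y : ℂ) : ℂ :=
  ∑' n : ℕ, ctfin (n + 1) p x * ctfin (n + 1) r z * y ^ (n + 1) / ((n : ℂ) + 1) ^ q

/-- Multiple polylogarithm `Li_{k₁,…,k_r}(z₁,…,z_r)`. -/
noncomputable def cMPL {r : ℕ} (k : Fin r → ℕ) (z : Fin r → ℂ) : ℂ :=
  ∑' n : {n : Fin r → ℕ // StrictMono n ∧ ∀ i, 0 < n i},
    ∏ i, z i ^ (n.1 i) / ((n.1 i : ℂ)) ^ (k i)

/-- Cyclotomic multiple S-value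
`S̃i_{k₁,…,k_r}(x₁,…,x_r) = 2^r ∑_{0<n₁<⋯<n_r} ∏ x_i^{n_i} / (2n_i - (i-1))^{k_i}`. -/
noncomputable def cSival {r : ℕ} (k : Fin r → ℕ) (x : Fin r → ℂ) : ℂ :=
  2 ^ r * ∑' n : {n : Fin r → ℕ // StrictMono n ∧ ∀ i, 0 < n i},
    ∏ i, x i ^ (n.1 i) / (2 * ((n.1 i : ℂ)) - ((i : ℕ) : ℂ)) ^ (k i)

/-!
Expand every `Li` into its series and sum over the signs termwise. For a tuple `n`, the weight
`∏ σ_j^(j-1) · ∏ σ_j^(n_j)` summed over `σ` vanishes unless every `n_j + j - 1` is even, when it is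
`2^r`; the surviving tuples are exactly `n_j = 2 m_j - (j - 1)` with `0 < m_1 < ⋯ < m_r`, which
turns the sum into `S̃i` at the squares of the square roots. Applied to `√x` and to `1/√x` this gives
the two halves of the identity. If the `Li` series is not absolutely summable then neither is the `S̃i`
series, whose summand dominates `2^(-∑ k)` times the `Li` summand, and both sides are `0`.
-/

namespace CyclotomicSival

theorem _root_.StrictMono.apply_add_sub_le {r : ℕ} {n : Fin r → ℕ} (hn : StrictMono n)
    {i j : Fin r} (hij : i ≤ j) : n i + ((j : ℕ) - (i : ℕ)) ≤ n j := by
  obtain ⟨d, hd⟩ : ∃ d, (j : ℕ) = i + d := ⟨j - i, by omega⟩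
  induction d generalizing j with
  | zero =>
    obtain rfl : j = i := Fin.ext (by omega)
    simp
  | succ d ih =>
    have hj' : (i : ℕ) + d < r := by omega
    have h₁ := ih (j := ⟨i + d, hj'⟩) (by rw [Fin.le_def]; simp) rfl
    have h₂ := hn (a := ⟨i + d, hj'⟩) (b := j) (by rw [Fin.lt_def]; simp; omega)
    simp only at h₁
    omega

abbrev PosIncTuple (r : ℕ) := {n : Fin r → ℕ // StrictMono n ∧ ∀ i, 0 < n i}

namespace PosIncTuple

variable {r : ℕ}

theorem add_sub_le (n : PosIncTuple r) {i j : Fin r} (hij : i ≤ j) :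
    n.1 i + ((j : ℕ) - (i : ℕ)) ≤ n.1 j :=
  n.2.1.apply_add_sub_le hij

theorem lt_apply (n : PosIncTuple r) (j : Fin r) : (j : ℕ) < n.1 j := by
  have h₀ : 0 < r := j.pos
  have := n.add_sub_le (i := ⟨0, h₀⟩) (j := j) (Fin.le_def.2 (Nat.zero_le _))
  have := n.2.2 ⟨0, h₀⟩
  simp only at *
  omega

-- `Fin r` is 0-based: this is the paper's `n_j = 2 m_j - (j - 1)`.
def double (m : PosIncTuple r) : PosIncTuple r :=
  ⟨fun j => 2 * m.1 j - j, fun i j hij => by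
    have := m.add_sub_le hij.le
    have := m.lt_apply i
    have : (i : ℕ) < j := hij
    show 2 * m.1 i - i < 2 * m.1 j - j
    omega, fun i => by have := m.lt_apply i; show 0 < 2 * m.1 i - i; omega⟩

theorem double_apply (m : PosIncTuple r) (j : Fin r) : (double m).1 j = 2 * m.1 j - j := rfl

theorem double_injective : Function.Injective (double (r := r)) := fun a b hab => by
  ext j
  have := congrFun (congrArg Subtype.val hab) j
  have := a.lt_apply j
  have := b.lt_apply j
  simp only [double_apply] at *
  omega

theorem mem_range_double {n : PosIncTuple r} (hn : ∀ j : Fin r, Even ((j : ℕ) + n.1 j)) :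
    n ∈ Set.range double := by
  refine ⟨⟨fun j => (n.1 j + j) / 2, fun i j hij => ?_, fun i => ?_⟩, ?_⟩
  · have := n.2.1 hij
    have : (i : ℕ) < j := hij
    have := hn i
    have := hn j
    simp only [Nat.even_iff] at *
    omega
  · have := n.2.2 i
    have := hn i
    rw [Nat.even_iff] at this
    simp only
    omega
  · ext j
    have := hn j
    rw [Nat.even_iff] at this
    simp only [double_apply]
    omega

end PosIncTuple

open PosIncTuple

def boolSign (b : Bool) : ℂ := if b then 1 else -1

theorem sum_boolSign_pow_mul (a : ℕ) (c : ℂ) :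
    ∑ b : Bool, boolSign b ^ a * c = if Even a then 2 * c else 0 := by
  rcases Nat.even_or_odd a with h | h
  · simp [boolSign, h.neg_one_pow, h]
  · simp [boolSign, h.neg_one_pow, Nat.not_even_iff_odd.2 h]

variable {r : ℕ} (k : Fin r → ℕ)

noncomputable def mplTerm (z : Fin r → ℂ) (n : PosIncTuple r) : ℂ :=
  ∏ i, z i ^ n.1 i / (n.1 i : ℂ) ^ k i

noncomputable def sivalTerm (x : Fin r → ℂ) (n : PosIncTuple r) : ℂ :=
  ∏ i, x i ^ n.1 i / (2 * (n.1 i : ℂ) - ((i : ℕ) : ℂ)) ^ k i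

theorem cMPL_eq_tsum_mplTerm (z : Fin r → ℂ) : cMPL k z = ∑' n, mplTerm k z n := rfl

theorem cSival_eq_tsum_sivalTerm (x : Fin r → ℂ) : cSival k x = 2 ^ r * ∑' n, sivalTerm k x n :=
  rfl

noncomputable def parityTerm (z : Fin r → ℂ) (n : PosIncTuple r) : ℂ :=
  ∏ j : Fin r,
    if Even ((j : ℕ) + n.1 j) then 2 * (z j ^ ((j : ℕ) + n.1 j) / (n.1 j : ℂ) ^ k j) else 0

theorem prod_pow_mul_sum_boolSign_mplTerm (z : Fin r → ℂ) (n : PosIncTuple r) :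
    (∏ j, z j ^ (j : ℕ)) * ∑ σ : Fin r → Bool,
        (∏ j, boolSign (σ j) ^ (j : ℕ)) * mplTerm k (fun j => boolSign (σ j) * z j) n =
      parityTerm k z n := by
  have expand : ∀ σ : Fin r → Bool,
      (∏ j, boolSign (σ j) ^ (j : ℕ)) * mplTerm k (fun j => boolSign (σ j) * z j) n =
        ∏ j, boolSign (σ j) ^ ((j : ℕ) + n.1 j) * (z j ^ n.1 j / (n.1 j : ℂ) ^ k j) := by
    intro σ
    rw [mplTerm, ← Finset.prod_mul_distrib]
    refine Finset.prod_congr rfl fun j _ => ?_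
    rw [mul_pow, pow_add]
    ring
  rw [Finset.sum_congr rfl fun σ _ => expand σ, ← Fintype.prod_sum fun (j : Fin r) (b : Bool) =>
    boolSign b ^ ((j : ℕ) + n.1 j) * (z j ^ n.1 j / (n.1 j : ℂ) ^ k j), parityTerm,
    ← Finset.prod_mul_distrib]
  refine Finset.prod_congr rfl fun j _ => ?_
  rw [sum_boolSign_pow_mul]
  split_ifs
  · rw [pow_add]
    ring
  · rw [mul_zero]

theorem parityTerm_double (z : Fin r → ℂ) (m : PosIncTuple r) :
    parityTerm k z (double m) = 2 ^ r * sivalTerm k (fun j => z j ^ 2) m := by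
  have factor : ∀ j : Fin r, (if Even ((j : ℕ) + (double m).1 j) then
        2 * (z j ^ ((j : ℕ) + (double m).1 j) / ((double m).1 j : ℂ) ^ k j) else 0) =
      2 * ((z j ^ 2) ^ m.1 j / (2 * (m.1 j : ℂ) - ((j : ℕ) : ℂ)) ^ k j) := by
    intro j
    have hj := m.lt_apply j
    have hsum : (j : ℕ) + (double m).1 j = 2 * m.1 j := by rw [double_apply]; omega
    rw [hsum, if_pos (even_two_mul _), double_apply, Nat.cast_sub (by omega), ← pow_mul]
    push_cast
    rfl
  rw [parityTerm, Finset.prod_congr rfl fun j _ => factor j, Finset.prod_mul_distrib,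
    Finset.prod_const, Finset.card_univ, Fintype.card_fin, sivalTerm]

theorem support_parityTerm_subset (z : Fin r → ℂ) :
    Function.support (parityTerm k z) ⊆ Set.range double := by
  intro n hn
  refine mem_range_double fun j => ?_
  by_contra hodd
  exact hn (Finset.prod_eq_zero (Finset.mem_univ j) (if_neg hodd :))

theorem tsum_parityTerm (z : Fin r → ℂ) :
    ∑' n, parityTerm k z n = cSival k (fun j => z j ^ 2) := by
  rw [← double_injective.tsum_eq (support_parityTerm_subset k z), cSival_eq_tsum_sivalTerm,
    ← tsum_mul_left]
  exact tsum_congr (parityTerm_double k z)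

theorem norm_mplTerm_boolSign (σ : Fin r → Bool) (z : Fin r → ℂ) (n : PosIncTuple r) :
    ‖mplTerm k (fun j => boolSign (σ j) * z j) n‖ = ‖mplTerm k z n‖ := by
  have : ∀ j, ‖boolSign (σ j)‖ = 1 := fun j => by cases σ j <;> simp [boolSign]
  simp only [mplTerm, norm_prod, norm_div, norm_pow, norm_mul, this, one_mul]

theorem norm_mplTerm_le {z : Fin r → ℂ} (hz : ∀ j, ‖z j‖ = 1) (n : PosIncTuple r) :
    ‖mplTerm k z n‖ ≤ 2 ^ (∑ j, k j) * ‖sivalTerm k (fun j => z j ^ 2) n‖ := by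
  rw [mplTerm, sivalTerm, norm_prod, norm_prod, ← Finset.prod_pow_eq_pow_sum,
    ← Finset.prod_mul_distrib]
  refine Finset.prod_le_prod (fun _ _ => norm_nonneg _) fun j _ => ?_
  have hj := n.lt_apply j
  have hcast : (2 * (n.1 j : ℂ) - ((j : ℕ) : ℂ)) = ((2 * n.1 j - j : ℝ) : ℂ) := by push_cast; rfl
  have hpos : (0 : ℝ) < 2 * n.1 j - j := by
    have : ((j : ℕ) : ℝ) < n.1 j := by exact_mod_cast hj
    linarith
  rw [norm_div, norm_div, norm_pow, norm_pow, norm_pow, norm_pow, norm_pow, hz, hcast,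
    Complex.norm_real, Real.norm_of_nonneg hpos.le, Complex.norm_natCast, one_pow, one_pow, one_pow]
  calc 1 / (n.1 j : ℝ) ^ k j ≤ 1 / ((2 * n.1 j - j) / 2 : ℝ) ^ k j :=
        one_div_le_one_div_of_le (by positivity) (pow_le_pow_left₀ (by linarith) (by linarith) _)
    _ = 2 ^ k j * (1 / (2 * n.1 j - j : ℝ) ^ k j) := by
        rw [div_pow]
        field_simp

theorem prod_pow_mul_sum_boolSign_cMPL {z : Fin r → ℂ} (hz : ∀ j, ‖z j‖ = 1) :
    (∏ j, z j ^ (j : ℕ)) * ∑ σ : Fin r → Bool,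
        (∏ j, boolSign (σ j) ^ (j : ℕ)) * cMPL k (fun j => boolSign (σ j) * z j) =
      cSival k (fun j => z j ^ 2) := by
  have summable_iff : ∀ σ : Fin r → Bool,
      Summable (mplTerm k (fun j => boolSign (σ j) * z j)) ↔ Summable (mplTerm k z) :=
    fun σ => by simp only [← summable_norm_iff (E := ℂ), norm_mplTerm_boolSign]
  by_cases hs : Summable (mplTerm k z)
  · have hσ := fun σ => (summable_iff σ).2 hs
    simp only [cMPL_eq_tsum_mplTerm, ← tsum_mul_left]
    rw [← Summable.tsum_finsetSum fun σ _ => (hσ σ).mul_left _, ← tsum_mul_left,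
      ← tsum_parityTerm]
    exact tsum_congr (prod_pow_mul_sum_boolSign_mplTerm k z)
  · have hS : ¬Summable (sivalTerm k fun j => z j ^ 2) := fun h =>
      hs (.of_norm_bounded (h.norm.mul_left _) (norm_mplTerm_le k hz))
    simp only [cMPL_eq_tsum_mplTerm, cSival_eq_tsum_sivalTerm,
      tsum_eq_zero_of_not_summable hS,
      fun σ => tsum_eq_zero_of_not_summable (mt (summable_iff σ).1 hs)]
    simp

theorem cSival_sub_mul_cSival_inv {x sq : Fin r → ℂ} (hsq : ∀ j, sq j ^ 2 = x j)
    (hsq_norm : ∀ j, ‖sq j‖ = 1) (c : ℂ) :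
    cSival k x - c * (∏ j, x j ^ (j : ℕ)) * cSival k (fun j => (x j)⁻¹) =
      (∏ j, sq j ^ (j : ℕ)) * ∑ σ : Fin r → Bool, (∏ j, boolSign (σ j) ^ (j : ℕ)) *
        (cMPL k (fun j => boolSign (σ j) * sq j) -
          c * cMPL k (fun j => (boolSign (σ j) * sq j)⁻¹)) := by
  have hsq_ne : ∀ j, sq j ≠ 0 := fun j => norm_ne_zero_iff.1 (by rw [hsq_norm]; exact one_ne_zero)
  have hpos := prod_pow_mul_sum_boolSign_cMPL k hsq_norm
  rw [show (fun j => sq j ^ 2) = x from funext hsq] at hpos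
  have hneg := prod_pow_mul_sum_boolSign_cMPL k (z := fun j => (sq j)⁻¹)
    fun j => by rw [norm_inv, hsq_norm, inv_one]
  have inv_arg : ∀ σ : Fin r → Bool,
      (fun j => boolSign (σ j) * (sq j)⁻¹) = fun j => (boolSign (σ j) * sq j)⁻¹ := fun σ => by
    funext j
    cases σ j <;> simp [boolSign, inv_neg]
  rw [show (fun j => (sq j)⁻¹ ^ 2) = fun j => (x j)⁻¹ from funext fun j => by rw [inv_pow, hsq]]
    at hneg
  simp only [inv_arg] at hneg
  have hprod_inv : (∏ j, sq j ^ (j : ℕ)) * ∏ j, (sq j)⁻¹ ^ (j : ℕ) = 1 := by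
    rw [← Finset.prod_mul_distrib, ← Finset.prod_const_one]
    exact Finset.prod_congr rfl fun j _ => by rw [← mul_pow, mul_inv_cancel₀ (hsq_ne j), one_pow]
  have hprod_sq : ∏ j, x j ^ (j : ℕ) = (∏ j, sq j ^ (j : ℕ)) ^ 2 := by
    rw [← Finset.prod_pow]
    exact Finset.prod_congr rfl fun j _ => by rw [← hsq, ← pow_mul, ← pow_mul, mul_comm]
  simp only [mul_sub, Finset.sum_sub_distrib, mul_left_comm _ c, ← Finset.mul_sum]
  rw [hprod_sq]
  linear_combination -hpos + c * (∏ j, sq j ^ (j : ℕ)) ^ 2 * hneg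
    - c * (∏ j, sq j ^ (j : ℕ)) * (∑ σ : Fin r → Bool, (∏ j, boolSign (σ j) ^ (j : ℕ)) *
        cMPL k (fun j => (boolSign (σ j) * sq j)⁻¹)) * hprod_inv

end CyclotomicSival

open CyclotomicSival in
/-- Parity of cyclotomic multiple S-values in terms of multiple polylogarithms at
square roots of the arguments. -/
theorem Sival_parity (r : ℕ) (k : Fin r → ℕ) (x sq : Fin r → ℂ)
    (hroot : ∀ j, IsRootOfUnity (x j))
    (hsq : ∀ j, sq j ^ 2 = x j) :
    cSival k x -
        (-1 : ℂ) ^ (∑ j, k j + r) * (∏ j, x j ^ (j : ℕ)) * cSival k (fun j => (x j)⁻¹) =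
      (∏ j, sq j ^ (j : ℕ)) *
        ∑ σ : Fin r → Bool,
          (∏ j, (if σ j then (1 : ℂ) else -1) ^ (j : ℕ)) *
            (cMPL k (fun j => (if σ j then (1 : ℂ) else -1) * sq j) -
              (-1 : ℂ) ^ (∑ j, k j + r) *
                cMPL k (fun j => ((if σ j then (1 : ℂ) else -1) * sq j)⁻¹)) := by
  have hsq_norm : ∀ j, ‖sq j‖ = 1 := fun j => by
    obtain ⟨n, hn, hxn⟩ := hroot j
    exact Complex.norm_eq_one_of_pow_eq_one (n := 2 * n) (by rw [pow_mul, hsq, hxn]) (by omega)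
  exact cSival_sub_mul_cSival_inv k hsq hsq_norm _
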